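/- Let (S,𝔖,μ) and (T,𝔗,ν) be measure spaces over σ-rings. Then the pair (𝔖 ⊗ 𝔗, 𝔖^σ ⊗ 𝔗^σ) has the simple extension property: any set C ∈ 𝔖 ⊗ 𝔗 contained in a set of 𝔖^σ ⊗ 𝔗^σ belongs to 𝔖^σ ⊗ 𝔗^σ. -/

import Mathlib

open Set ENNReal

/-- A family of sets is a σ-ring if it contains `∅` and is closed under
set differences and countable unions. -/
def IsSigmaRing {α : Type*} (C : Set (Set α)) : Prop :=
  ∅ ∈ C ∧ (∀ A B : Set α, A ∈ C → B ∈ C → A \ B ∈ C) ∧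
    ∀ f : ℕ → Set α, (∀ n, f n ∈ C) → (⋃ n, f n) ∈ C

/-- The σ-ring generated by a family of sets. -/
def genSR {α : Type*} (D : Set (Set α)) : Set (Set α) :=
  ⋂₀ {C | IsSigmaRing C ∧ D ⊆ C}

/-- A measure on a σ-ring: countably additive, vanishing on `∅`. -/
def IsMeasure {α : Type*} (C : Set (Set α)) (μ : Set α → ℝ≥0∞) : Prop :=
  μ ∅ = 0 ∧ ∀ f : ℕ → Set α, (∀ n, f n ∈ C) →
    Pairwise (Function.onFun Disjoint f) → μ (⋃ n, f n) = ∑' n, μ (f n)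

/-- The family of μ-σ-finite sets: countable unions of sets of finite measure. -/
def sigmaFin {α : Type*} (C : Set (Set α)) (μ : Set α → ℝ≥0∞) : Set (Set α) :=
  {A | ∃ g : ℕ → Set α, (∀ n, g n ∈ C ∧ μ (g n) < ⊤) ∧ A = ⋃ n, g n}

/-- Restriction of a family of sets to a set `S`. -/
def restrictFam {α : Type*} (D : Set (Set α)) (S : Set α) : Set (Set α) :=
  (fun A => A ∩ S) '' D

/-- The product σ-ring, generated by measurable rectangles. -/
def prodSR {α β : Type*} (S : Set (Set α)) (T : Set (Set β)) : Set (Set (α × β)) :=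
  genSR {R | ∃ A ∈ S, ∃ B ∈ T, R = A ×ˢ B}

/-- The σ-algebra generated by a family of sets. -/
def genSA {α : Type*} (D : Set (Set α)) : MeasurableSpace α :=
  MeasurableSpace.generateFrom D

/-- The (extended) Lebesgue integral of a nonnegative function with respect to a
measure on a σ-ring, as the supremum of integrals of simple functions below it. -/
noncomputable def lintSR {α : Type*} (C : Set (Set α)) (μ : Set α → ℝ≥0∞)
    (f : α → ℝ≥0∞) : ℝ≥0∞ :=
  ⨆ (n : ℕ) (c : Fin n → ℝ≥0∞) (A : Fin n → Set α) (_ : ∀ i, A i ∈ C)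
    (_ : ∀ x, (∑ i, (A i).indicator (fun _ => c i) x) ≤ f x),
    ∑ i, c i * μ (A i)

/-- The positive part of an extended real, as an `ℝ≥0∞`. -/
noncomputable def epos (x : EReal) : ℝ≥0∞ := (x ⊔ 0).abs

/-- Measurability of an extended-real function with respect to a σ-ring:
measurable for the generated σ-algebra, with support in the σ-ring. -/
def SRMeasurableE {α : Type*} (C : Set (Set α)) (f : α → EReal) : Prop :=
  @Measurable α EReal (genSA C) _ f ∧ {x | f x ≠ 0} ∈ C

/-- The Lebesgue integral of an extended-real function w.r.t. a measure on a σ-ring. -/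
noncomputable def integralE {α : Type*} (C : Set (Set α)) (μ : Set α → ℝ≥0∞)
    (f : α → EReal) : EReal :=
  ((lintSR C μ fun x => epos (f x) : ℝ≥0∞) : EReal) -
    ((lintSR C μ fun x => epos (-f x) : ℝ≥0∞) : EReal)

/-- Integrability of an extended-real function w.r.t. a measure on a σ-ring. -/
def IntegrableE {α : Type*} (C : Set (Set α)) (μ : Set α → ℝ≥0∞)
    (f : α → EReal) : Prop :=
  SRMeasurableE C f ∧ lintSR C μ (fun x => (f x).abs) < ⊤

/-- `lam` is the product of the measures `μ` and `ν` on σ-rings `S`, `T`: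
the unique measure on the product σ-ring whose σ-finite component is the Halmos
product of the σ-finite components. -/
def IsProdMeasure {α β : Type*} (S : Set (Set α)) (T : Set (Set β))
    (μ : Set α → ℝ≥0∞) (ν : Set β → ℝ≥0∞) (lam : Set (α × β) → ℝ≥0∞) : Prop :=
  IsMeasure (prodSR S T) lam ∧
  (∀ A ∈ S, ∀ B ∈ T, μ A < ⊤ → ν B < ⊤ → lam (A ×ˢ B) = μ A * ν B) ∧
  sigmaFin (prodSR S T) lam =
    genSR {R | ∃ A ∈ S, ∃ B ∈ T, μ A < ⊤ ∧ ν B < ⊤ ∧ R = A ×ˢ B}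

/-!
A set of `𝔖^σ ⊗ 𝔗^σ` lies in a single rectangle `A ×ˢ B` with `A`, `B` σ-finite, since the sets
contained in such a rectangle form a σ-ring containing the generating rectangles. Intersecting
with `A ×ˢ B` maps `𝔖 ⊗ 𝔗` into `𝔖^σ ⊗ 𝔗^σ`: the sets with this property form a σ-ring, and a
rectangle `A' ×ˢ B'` is sent to `(A' ∩ A) ×ˢ (B' ∩ B)`, whose sides are σ-finite because a
measurable subset of a set of finite measure has finite measure.
-/

section SigmaRing

variable {α : Type*}

lemma subset_genSR (D : Set (Set α)) : D ⊆ genSR D :=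
  fun _ hA _ hC => hC.2 hA

lemma genSR_subset {D C : Set (Set α)} (hC : IsSigmaRing C) (h : D ⊆ C) : genSR D ⊆ C :=
  fun _ hA => hA C ⟨hC, h⟩

lemma isSigmaRing_genSR (D : Set (Set α)) : IsSigmaRing (genSR D) :=
  ⟨fun _ hC => hC.1.1, fun A B hA hB C hC => hC.1.2.1 A B (hA C hC) (hB C hC),
    fun f hf C hC => hC.1.2.2 f fun n => hf n C hC⟩

lemma IsSigmaRing.inter_mem {C : Set (Set α)} (hC : IsSigmaRing C) {A B : Set α}
    (hA : A ∈ C) (hB : B ∈ C) : A ∩ B ∈ C := by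
  rw [← Set.sdiff_sdiff_right_self]
  exact hC.2.1 _ _ hA (hC.2.1 _ _ hA hB)

lemma IsSigmaRing.setOf_inter_mem {C : Set (Set α)} (hC : IsSigmaRing C) (X : Set α) :
    IsSigmaRing {E | E ∩ X ∈ C} := by
  refine ⟨by simpa using hC.1, fun E F hE hF => ?_, fun f hf => ?_⟩
  · rw [mem_ofPred_eq, inter_sdiff_distrib_right]
    exact hC.2.1 _ _ hE hF
  · rw [mem_ofPred_eq, iUnion_inter]
    exact hC.2.2 _ hf

end SigmaRing

section Measure

variable {α : Type*} {S : Set (Set α)} {μ : Set α → ℝ≥0∞}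

lemma IsMeasure.mono (hS : IsSigmaRing S) (hμ : IsMeasure S μ) {E F : Set α}
    (hE : E ∈ S) (hF : F ∈ S) (hEF : E ⊆ F) : μ E ≤ μ F := by
  let f : ℕ → Set α := fun n => if n = 0 then E else if n = 1 then F \ E else ∅
  have hf : ∀ n, f n ∈ S := fun n => by
    unfold f; split_ifs
    exacts [hE, hS.2.1 _ _ hF hE, hS.1]
  have hdisj : Pairwise (Function.onFun Disjoint f) := by
    intro i j hij
    rcases i with _ | _ | i <;> rcases j with _ | _ | j <;>
      simp_all [f, Function.onFun, disjoint_sdiff_right, disjoint_sdiff_left]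
  have hunion : (⋃ n, f n) = F := by
    refine subset_antisymm (iUnion_subset fun n => ?_) fun x hx => ?_
    · unfold f; split_ifs
      exacts [hEF, sdiff_subset, empty_subset _]
    · by_cases hxE : x ∈ E
      · exact mem_iUnion.2 ⟨0, by simpa [f] using hxE⟩
      · exact mem_iUnion.2 ⟨1, by simp [f, hx, hxE]⟩
  calc μ E = μ (f 0) := rfl
    _ ≤ ∑' n, μ (f n) := ENNReal.le_tsum 0
    _ = μ F := by rw [← hμ.2 f hf hdisj, hunion]

lemma empty_mem_sigmaFin (hS : IsSigmaRing S) (hμ : IsMeasure S μ) : ∅ ∈ sigmaFin S μ :=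
  ⟨fun _ => ∅, fun _ => ⟨hS.1, by simp [hμ.1]⟩, by simp⟩

lemma iUnion_mem_sigmaFin (f : ℕ → Set α) (hf : ∀ n, f n ∈ sigmaFin S μ) :
    (⋃ n, f n) ∈ sigmaFin S μ := by
  choose g hg hfg using hf
  refine ⟨fun k => g k.unpair.1 k.unpair.2, fun k => hg _ _, ?_⟩
  rw [iUnion_unpair g]
  exact iUnion_congr hfg

lemma inter_mem_sigmaFin (hS : IsSigmaRing S) (hμ : IsMeasure S μ) {A' A : Set α}
    (hA' : A' ∈ S) (hA : A ∈ sigmaFin S μ) : A' ∩ A ∈ sigmaFin S μ := by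
  obtain ⟨g, hg, rfl⟩ := hA
  refine ⟨fun n => A' ∩ g n, fun n => ?_, inter_iUnion A' g⟩
  have hmem : A' ∩ g n ∈ S := hS.inter_mem hA' (hg n).1
  exact ⟨hmem, (hμ.mono hS hmem (hg n).1 inter_subset_right).trans_lt (hg n).2⟩

end Measure

section ProductSigmaRing

variable {α β : Type*}

lemma exists_prod_superset_of_mem_prodSR {P : Set (Set α)} {Q : Set (Set β)}
    (hP₀ : ∅ ∈ P) (hQ₀ : ∅ ∈ Q)
    (hP : ∀ f : ℕ → Set α, (∀ n, f n ∈ P) → (⋃ n, f n) ∈ P)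
    (hQ : ∀ f : ℕ → Set β, (∀ n, f n ∈ Q) → (⋃ n, f n) ∈ Q)
    {D : Set (α × β)} (hD : D ∈ prodSR P Q) : ∃ A ∈ P, ∃ B ∈ Q, D ⊆ A ×ˢ B := by
  refine genSR_subset (C := {D | ∃ A ∈ P, ∃ B ∈ Q, D ⊆ A ×ˢ B}) ⟨?_, ?_, ?_⟩ ?_ hD
  · exact ⟨∅, hP₀, ∅, hQ₀, empty_subset _⟩
  · rintro E F ⟨A, hA, B, hB, hEAB⟩ -
    exact ⟨A, hA, B, hB, sdiff_subset.trans hEAB⟩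
  · intro f hf
    choose A hA B hB hfAB using hf
    refine ⟨⋃ n, A n, hP A hA, ⋃ n, B n, hQ B hB, iUnion_subset fun n => ?_⟩
    exact (hfAB n).trans (prod_mono (subset_iUnion A n) (subset_iUnion B n))
  · rintro _ ⟨A, hA, B, hB, rfl⟩
    exact ⟨A, hA, B, hB, subset_rfl⟩

lemma inter_prod_mem_prodSR {S P : Set (Set α)} {T Q : Set (Set β)} {A : Set α} {B : Set β}
    (hSP : ∀ A' ∈ S, A' ∩ A ∈ P) (hTQ : ∀ B' ∈ T, B' ∩ B ∈ Q)
    {C : Set (α × β)} (hC : C ∈ prodSR S T) : C ∩ A ×ˢ B ∈ prodSR P Q := by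
  refine genSR_subset ((isSigmaRing_genSR _).setOf_inter_mem (A ×ˢ B)) ?_ hC
  rintro _ ⟨A', hA', B', hB', rfl⟩
  rw [mem_ofPred_eq, prod_inter_prod]
  exact subset_genSR _ ⟨_, hSP A' hA', _, hTQ B' hB', rfl⟩

end ProductSigmaRing

/-- the pair `(𝔖 ⊗ 𝔗, 𝔖^σ ⊗ 𝔗^σ)` has the simple extension
property. -/
theorem stmt_8 {α β : Type*} (S : Set (Set α)) (T : Set (Set β))
    (μ : Set α → ℝ≥0∞) (ν : Set β → ℝ≥0∞)
    (hS : IsSigmaRing S) (hT : IsSigmaRing T)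
    (hμ : IsMeasure S μ) (hν : IsMeasure T ν) :
    ∀ C ∈ prodSR S T, ∀ D ∈ prodSR (sigmaFin S μ) (sigmaFin T ν),
      C ⊆ D → C ∈ prodSR (sigmaFin S μ) (sigmaFin T ν) := by
  intro C hC D hD hCD
  obtain ⟨A, hA, B, hB, hDAB⟩ := exists_prod_superset_of_mem_prodSR
    (empty_mem_sigmaFin hS hμ) (empty_mem_sigmaFin hT hν) iUnion_mem_sigmaFin
    iUnion_mem_sigmaFin hD
  have hCAB : C ∩ A ×ˢ B ∈ prodSR (sigmaFin S μ) (sigmaFin T ν) :=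
    inter_prod_mem_prodSR (fun _ hA' => inter_mem_sigmaFin hS hμ hA' hA)
      (fun _ hB' => inter_mem_sigmaFin hT hν hB' hB) hC
  rwa [inter_eq_left.2 (hCD.trans hDAB)] at hCAB
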